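/- There exists a constant κ > 0 such that for all real σ with 0 ≤ σ ≤ 1 and σ ≠ 1/2, and all real t, if ‖X(σ + it)‖ = 1 then |t| ≤ κ; that is, the set of t with ‖X(σ + it)‖ = 1 in the critical strip off the critical line is uniformly bounded. -/

import Mathlib

/-
Since `Γ(s̄) = conj Γ(s)`, `‖X(σ + it)‖ = (5/π)^(1/2 - σ) ‖Γ(a + iy)‖ / ‖Γ(b + iy)‖` with
`a = 1 - σ/2`, `b = (1 + σ)/2`, `y = t/2`, and `‖X(1 - σ + it)‖ ‖X(σ + it)‖ = 1`; so it suffices to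
show `‖X(σ + it)‖ > 1` for `0 ≤ σ < 1/2` and `|t| ≥ 20`. There `1/2 ≤ b < a ≤ 1` and the power is
at least `1`, so one needs `‖Γ(b + iy)‖ < ‖Γ(a + iy)‖` for `|y| ≥ 10`. Euler's limit formula shows
that `σ ↦ ‖Γ(σ + iy)‖ / Γ(σ)` is nondecreasing; applied at `b + 3 ≤ a + 3`, together with
`Γ(b + 2) ≤ Γ(a + 2)`, it reduces the claim to an explicit polynomial inequality between
`‖b + iy + j‖` and `‖a + iy + j‖` for `j = 0, 1, 2`, which holds as soon as `y² ≥ 100`.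
-/

noncomputable def X (s : ℂ) : ℂ :=
  (5 / Real.pi : ℂ) ^ ((1 : ℂ) / 2 - s) * Complex.Gamma (1 - s / 2) / Complex.Gamma ((1 + s) / 2)

open Complex Filter Finset
open scoped Nat ComplexConjugate

lemma norm_GammaSeq_ofReal_add_mul_I {σ : ℝ} (hσ : σ ≠ 0) (y : ℝ) (n : ℕ) :
    ‖GammaSeq (σ + y * I) n‖ =
      n ^ σ * n ! / ∏ j ∈ range (n + 1), ‖((σ + j : ℝ) : ℂ) + y * I‖ := by
  rw [GammaSeq, norm_div, norm_mul, norm_prod,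
    norm_natCast_cpow_of_re_ne_zero _ (by simpa using hσ), Complex.norm_natCast]
  simp only [add_re, ofReal_re, mul_re, I_re, mul_zero, ofReal_im, I_im, mul_one, sub_self,
    add_zero]
  congr 1
  refine prod_congr rfl fun j _ => ?_
  push_cast
  ring_nf

lemma norm_ofReal_add_mul_I_pos {x : ℝ} (hx : 0 < x) (y : ℝ) : 0 < ‖(x : ℂ) + y * I‖ :=
  norm_pos_iff.2 (ne_zero_of_re_pos (by simpa using hx))

lemma norm_ofReal_add_mul_I_mul_le {x x' : ℝ} (hx : 0 ≤ x) (hxx' : x ≤ x') (y : ℝ) :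
    ‖(x' : ℂ) + y * I‖ * x ≤ ‖(x : ℂ) + y * I‖ * x' := by
  have hx' := hx.trans hxx'
  rw [← pow_le_pow_iff_left₀ (by positivity) (by positivity) two_ne_zero, mul_pow, mul_pow,
    Complex.sq_norm, Complex.sq_norm, normSq_add_mul_I, normSq_add_mul_I]
  nlinarith [mul_le_mul_of_nonneg_left (pow_le_pow_left₀ hx hxx' 2) (sq_nonneg y)]

theorem norm_Gamma_mul_Gamma_le {a b : ℝ} (hb : 0 < b) (hab : b ≤ a) (y : ℝ) :
    ‖Gamma (b + y * I)‖ * Real.Gamma a ≤ ‖Gamma (a + y * I)‖ * Real.Gamma b := by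
  have ha := hb.trans_le hab
  refine le_of_tendsto_of_tendsto
    ((GammaSeq_tendsto_Gamma _).norm.mul (Real.GammaSeq_tendsto_Gamma a))
    ((GammaSeq_tendsto_Gamma _).norm.mul (Real.GammaSeq_tendsto_Gamma b))
    (Eventually.of_forall fun n => ?_)
  -- Euler's limit formula makes `‖Γ(σ + yi)‖ / Γ(σ)` a limit of products of the factors
  -- `(σ + j) / ‖σ + j + yi‖`, each of which is nondecreasing in `σ`.
  simp only [norm_GammaSeq_ofReal_add_mul_I ha.ne', norm_GammaSeq_ofReal_add_mul_I hb.ne',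
    Real.GammaSeq, div_mul_div_comm, ← prod_mul_distrib]
  rw [mul_comm ((n : ℝ) ^ b * _)]
  refine div_le_div_of_nonneg_left (by positivity)
    (prod_pos fun j _ => mul_pos (norm_ofReal_add_mul_I_pos (by positivity) y) (by positivity))
    (prod_le_prod (fun j _ => by positivity) fun j _ => ?_)
  exact norm_ofReal_add_mul_I_mul_le (by positivity) (by linarith) y

lemma add_sq_add_le_mul {a b u : ℝ} (j : ℝ) (hab : b ≤ a) (hab2 : a + b ≤ 2) (hj : 0 ≤ j)
    (hu : 100 ≤ u) :
    (a + j) ^ 2 + u ≤ ((b + j) ^ 2 + u) * (1 + (j + 1) * (a - b) / 50) := by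
  have hp : 100 ≤ (b + j) ^ 2 + u := by nlinarith
  nlinarith [mul_le_mul_of_nonneg_right hp (by nlinarith : 0 ≤ (j + 1) * (a - b))]

lemma add_two_sq_mul_prod_lt {a b u : ℝ} (hb : 0 ≤ b) (hab : b < a) (ha : a ≤ 1) (hu : 100 ≤ u) :
    (b + 2) ^ 2 * ((a ^ 2 + u) * ((a + 1) ^ 2 + u) * ((a + 2) ^ 2 + u)) <
      (a + 2) ^ 2 * ((b ^ 2 + u) * ((b + 1) ^ 2 + u) * ((b + 2) ^ 2 + u)) := by
  have h0 := add_sq_add_le_mul 0 hab.le (by linarith) le_rfl hu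
  have h1 := add_sq_add_le_mul 1 hab.le (by linarith) zero_le_one hu
  have h2 := add_sq_add_le_mul 2 hab.le (by linarith) zero_le_two hu
  norm_num at h0 h1 h2
  set d := a - b
  have hd : 0 < d := sub_pos.2 hab
  have hq : (1 + d / 50) * (1 + 2 * d / 50) * (1 + 3 * d / 50) ≤ 1 + d / 4 := by
    nlinarith [mul_nonneg hd.le hd.le, mul_nonneg (mul_nonneg hd.le hd.le) hd.le]
  have hprod : (a ^ 2 + u) * ((a + 1) ^ 2 + u) * ((a + 2) ^ 2 + u) ≤
      (b ^ 2 + u) * ((b + 1) ^ 2 + u) * ((b + 2) ^ 2 + u) * (1 + d / 4) :=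
    calc _ ≤ ((b ^ 2 + u) * (1 + d / 50)) * (((b + 1) ^ 2 + u) * (1 + 2 * d / 50)) *
          (((b + 2) ^ 2 + u) * (1 + 3 * d / 50)) := by gcongr
      _ = (b ^ 2 + u) * ((b + 1) ^ 2 + u) * ((b + 2) ^ 2 + u) *
          ((1 + d / 50) * (1 + 2 * d / 50) * (1 + 3 * d / 50)) := by ring
      _ ≤ _ := by gcongr
  have hlead : (b + 2) ^ 2 * (1 + d / 4) < (a + 2) ^ 2 := by
    have ha' : a = b + d := by ring
    rw [ha']
    nlinarith [mul_pos hd (mul_pos (by linarith : 0 < b + 2)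
      (by linarith : 0 < 2 - (b + 2) / 4))]
  calc _ ≤ (b + 2) ^ 2 * ((b ^ 2 + u) * ((b + 1) ^ 2 + u) * ((b + 2) ^ 2 + u) * (1 + d / 4)) := by
        gcongr
    _ = (b + 2) ^ 2 * (1 + d / 4) * ((b ^ 2 + u) * ((b + 1) ^ 2 + u) * ((b + 2) ^ 2 + u)) := by
        ring
    _ < _ := by gcongr

lemma norm_Gamma_add_three {s : ℂ} (hs : 0 < s.re) :
    ‖Gamma (s + 3)‖ = ‖s‖ * ‖s + 1‖ * ‖s + 2‖ * ‖Gamma s‖ := by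
  rw [show s + 3 = s + 2 + 1 by ring, Gamma_add_one _ (ne_zero_of_re_pos (by simp; linarith)),
    show s + 2 = s + 1 + 1 by ring, Gamma_add_one _ (ne_zero_of_re_pos (by simp; linarith)),
    Gamma_add_one _ (ne_zero_of_re_pos hs)]
  simp only [norm_mul]
  ring

lemma add_two_mul_norm_prod_lt {a b y : ℝ} (hb : 0 ≤ b) (hab : b < a) (ha : a ≤ 1)
    (hy : 10 ≤ |y|) :
    (b + 2) * (‖(a : ℂ) + y * I‖ * ‖(a : ℂ) + y * I + 1‖ * ‖(a : ℂ) + y * I + 2‖) <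
      (a + 2) * (‖(b : ℂ) + y * I‖ * ‖(b : ℂ) + y * I + 1‖ * ‖(b : ℂ) + y * I + 2‖) := by
  rw [← pow_lt_pow_iff_left₀ (by positivity) (mul_nonneg (by linarith) (by positivity))
    two_ne_zero]
  simp only [mul_pow, Complex.sq_norm, normSq_apply, add_re, add_im, ofReal_re, ofReal_im,
    mul_re, mul_im, I_re, I_im, one_re, one_im, re_ofNat, im_ofNat]
  have hu : 100 ≤ y ^ 2 := by nlinarith [sq_abs y]
  refine lt_of_eq_of_lt ?_ ((add_two_sq_mul_prod_lt hb hab ha hu).trans_eq ?_) <;> ring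

theorem norm_Gamma_lt_norm_Gamma {a b y : ℝ} (hb : 0 < b) (hab : b < a) (ha : a ≤ 1)
    (hy : 10 ≤ |y|) : ‖Gamma (b + y * I)‖ < ‖Gamma (a + y * I)‖ := by
  have hshift := norm_Gamma_mul_Gamma_le (by linarith : 0 < b + 3) (by linarith : b + 3 ≤ a + 3) y
  rw [show ((b + 3 : ℝ) : ℂ) + y * I = b + y * I + 3 by push_cast; ring,
    show ((a + 3 : ℝ) : ℂ) + y * I = a + y * I + 3 by push_cast; ring,
    norm_Gamma_add_three (by simpa using hb), norm_Gamma_add_three (by simp; linarith),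
    show b + 3 = b + 2 + 1 by ring, show a + 3 = a + 2 + 1 by ring,
    Real.Gamma_add_one (by linarith), Real.Gamma_add_one (by linarith)] at hshift
  have hΓ : Real.Gamma (b + 2) ≤ Real.Gamma (a + 2) :=
    Real.Gamma_strictMonoOn_Ici.monotoneOn (by simp; linarith) (by simp; linarith) (by linarith)
  have hΓa : 0 < Real.Gamma (a + 2) := Real.Gamma_pos_of_pos (by linarith)
  have hA : 0 < ‖Gamma (a + y * I)‖ :=
    norm_pos_iff.2 (Gamma_ne_zero_of_re_pos (by simp; linarith))
  set A : ℂ := a + y * I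
  set B : ℂ := b + y * I
  have key : ‖Gamma B‖ * ((a + 2) * (‖B‖ * ‖B + 1‖ * ‖B + 2‖)) ≤
      ‖Gamma A‖ * ((b + 2) * (‖A‖ * ‖A + 1‖ * ‖A + 2‖)) := by
    refine le_of_mul_le_mul_right ?_ hΓa
    calc _ = ‖B‖ * ‖B + 1‖ * ‖B + 2‖ * ‖Gamma B‖ * ((a + 2) * Real.Gamma (a + 2)) := by ring
      _ ≤ ‖A‖ * ‖A + 1‖ * ‖A + 2‖ * ‖Gamma A‖ * ((b + 2) * Real.Gamma (b + 2)) := hshift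
      _ ≤ ‖A‖ * ‖A + 1‖ * ‖A + 2‖ * ‖Gamma A‖ * ((b + 2) * Real.Gamma (a + 2)) := by
        gcongr
      _ = _ := by ring
  refine lt_of_mul_lt_mul_right (key.trans_lt ?_) (mul_nonneg (by linarith) (by positivity))
  exact mul_lt_mul_of_pos_left (add_two_mul_norm_prod_lt hb.le hab ha hy) hA

lemma norm_X (σ t : ℝ) :
    ‖X (σ + t * I)‖ = (5 / Real.pi) ^ (1 / 2 - σ) * ‖Gamma ((1 - σ / 2 : ℝ) + (t / 2 : ℝ) * I)‖ /
      ‖Gamma (((1 + σ) / 2 : ℝ) + (t / 2 : ℝ) * I)‖ := by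
  have h₁ : 1 - (σ + t * I) / 2 = conj (((1 - σ / 2 : ℝ) : ℂ) + (t / 2 : ℝ) * I) := by
    simp only [map_add, map_mul, conj_ofReal, conj_I]
    push_cast
    ring
  have h₂ : (1 + (σ + t * I)) / 2 = ((1 + σ) / 2 : ℝ) + (t / 2 : ℝ) * I := by
    push_cast
    ring
  rw [X, h₁, h₂, Gamma_conj, norm_div, norm_mul, RCLike.norm_conj,
    show (5 / Real.pi : ℂ) = ((5 / Real.pi : ℝ) : ℂ) by push_cast; rfl,
    norm_cpow_eq_rpow_re_of_pos (by positivity)]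
  simp

lemma norm_X_one_sub_mul_norm_X {σ : ℝ} (hσ₀ : -1 < σ) (hσ₁ : σ < 2) (t : ℝ) :
    ‖X ((1 - σ : ℝ) + t * I)‖ * ‖X (σ + t * I)‖ = 1 := by
  rw [norm_X, norm_X, show 1 - (1 - σ) / 2 = (1 + σ) / 2 by ring,
    show (1 + (1 - σ)) / 2 = 1 - σ / 2 by ring]
  have hΓ₁ : ‖Gamma ((1 - σ / 2 : ℝ) + (t / 2 : ℝ) * I)‖ ≠ 0 :=
    norm_ne_zero_iff.2 (Gamma_ne_zero_of_re_pos (by simp; linarith))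
  have hΓ₂ : ‖Gamma (((1 + σ) / 2 : ℝ) + (t / 2 : ℝ) * I)‖ ≠ 0 :=
    norm_ne_zero_iff.2 (Gamma_ne_zero_of_re_pos (by simp; linarith))
  have hpow : (5 / Real.pi) ^ (1 / 2 - (1 - σ)) * (5 / Real.pi) ^ (1 / 2 - σ) = 1 := by
    rw [← Real.rpow_add (by positivity), show 1 / 2 - (1 - σ) + (1 / 2 - σ) = 0 by ring,
      Real.rpow_zero]
  rw [div_mul_div_comm, div_eq_one_iff_eq (mul_ne_zero hΓ₁ hΓ₂)]
  linear_combination (‖Gamma ((1 - σ / 2 : ℝ) + (t / 2 : ℝ) * I)‖ *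
    ‖Gamma (((1 + σ) / 2 : ℝ) + (t / 2 : ℝ) * I)‖) * hpow

lemma one_lt_norm_X {σ t : ℝ} (hσ₀ : 0 ≤ σ) (hσ : σ < 1 / 2) (ht : 20 ≤ |t|) :
    1 < ‖X (σ + t * I)‖ := by
  have hΓ := norm_Gamma_lt_norm_Gamma (a := 1 - σ / 2) (b := (1 + σ) / 2) (y := t / 2)
    (by linarith) (by linarith) (by linarith) (by rw [abs_div, abs_two]; linarith)
  have hpow : 1 ≤ (5 / Real.pi) ^ (1 / 2 - σ) :=
    Real.one_le_rpow ((one_le_div Real.pi_pos).2 (by linarith [Real.pi_le_four])) (by linarith)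
  have hB : 0 < ‖Gamma (((1 + σ) / 2 : ℝ) + (t / 2 : ℝ) * I)‖ :=
    norm_pos_iff.2 (Gamma_ne_zero_of_re_pos (by simp; linarith))
  rw [norm_X, lt_div_iff₀ hB, one_mul]
  exact hΓ.trans_le (le_mul_of_one_le_left (norm_nonneg _) hpow)

theorem stmt_15 :
    ∃ κ : ℝ, 0 < κ ∧
      ∀ σ t : ℝ, 0 ≤ σ → σ ≤ 1 → σ ≠ 1 / 2 →
        ‖X ((σ : ℂ) + (t : ℂ) * Complex.I)‖ = 1 → |t| ≤ κ := by
  refine ⟨20, by norm_num, fun σ t hσ₀ hσ₁ hσ hX => ?_⟩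
  by_contra! ht
  rcases hσ.lt_or_gt with hσ | hσ
  · exact (one_lt_norm_X hσ₀ hσ ht.le).ne' hX
  · have hX' := norm_X_one_sub_mul_norm_X (σ := σ) (by linarith) (by linarith) t
    rw [hX, mul_one] at hX'
    exact (one_lt_norm_X (σ := 1 - σ) (by linarith) (by linarith) ht.le).ne' hX'
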